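/- arXiv:2507.02433 — 5 statements merged into one kernel-verified Lean document; each statement's English description precedes it below -/
import Mathlib

section
/- If 0 ≤ ε < 0.7 and |x - y| ≤ ε|x| for real numbers x and y, then sgn(x) = sgn(y) and e^{-2ε}|y| ≤ |x| ≤ e^{2ε}|y|. -/
/-- `approx ε x y` means `x ≈_ε y`: same sign and `e^{-ε}|y| ≤ |x| ≤ e^{ε}|y|`. -/
def approx (ε x y : ℝ) : Prop :=
  Real.sign x = Real.sign y ∧ Real.exp (-ε) * |y| ≤ |x| ∧ |x| ≤ Real.exp ε * |y|

theorem approx_of_close (ε x y : ℝ) (hε0 : 0 ≤ ε) (hε : ε < 0.7)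
    (h : |x - y| ≤ ε * |x|) : approx (2 * ε) x y := by
  have hexp : 1 + 2*ε + (2*ε)^2/2 ≤ Real.exp (2*ε) :=
    Real.quadratic_le_exp_of_nonneg (by linarith)
  have hexppos : (0:ℝ) < Real.exp (2*ε) := Real.exp_pos _
  rcases eq_or_ne x 0 with hx | hx
  · have hy : y = 0 := by
      have := h
      rw [hx] at this
      simp only [zero_sub, abs_neg, abs_zero, mul_zero] at this
      exact abs_nonpos_iff.mp this
    subst hx; subst hy
    refine ⟨rfl, by simp, by simp⟩
  · have hxpos : 0 < |x| := abs_pos.mpr hx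
    have h1 : |y| ≤ (1 + ε) * |x| := by
      have := abs_sub_abs_le_abs_sub y x
      rw [abs_sub_comm] at this
      nlinarith
    have h2 : (1 - ε) * |x| ≤ |y| := by
      have := abs_sub_abs_le_abs_sub x y
      nlinarith
    have hkey : 1 ≤ (1 - ε) * Real.exp (2*ε) := by
      nlinarith [sq_nonneg ε, sq_nonneg (ε - 0.5)]
    constructor
    · rcases lt_trichotomy x 0 with hlt | heq | hgt
      · have hax : |x| = -x := abs_of_neg hlt
        have hylt : y < 0 := by
          have hxy : -(x - y) ≤ |x - y| := neg_le_abs _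
          nlinarith
        rw [Real.sign_of_neg hlt, Real.sign_of_neg hylt]
      · exact absurd heq hx
      · have hax : |x| = x := abs_of_pos hgt
        have hygt : 0 < y := by
          have hxy : x - y ≤ |x - y| := le_abs_self _
          nlinarith
        rw [Real.sign_of_pos hgt, Real.sign_of_pos hygt]
    constructor
    · rw [Real.exp_neg]
      rw [inv_mul_le_iff₀ hexppos]
      calc |y| ≤ (1 + ε) * |x| := h1
        _ ≤ Real.exp (2*ε) * |x| := by nlinarith [sq_nonneg ε]
    · calc |x| ≤ (1 - ε) * Real.exp (2*ε) * |x| := by nlinarith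
        _ ≤ Real.exp (2*ε) * |y| := by nlinarith
end

section
/- For an integer n > 1, the number of primes in the interval (n, n²] is at least (n² − n)/(2·log₂ n). -/
open Finset Real ArithmeticFunction

private def C0 : List Nat := [2, 3, 5, 7, 11, 13, 17, 19, 23, 29, 31, 37, 41, 43, 47, 53, 59, 61, 67, 71, 73, 79, 83, 89, 97, 101, 103, 107, 109, 113, 127, 131, 137, 139, 149, 151, 157, 163, 167, 173, 179, 181, 191, 193, 197, 199, 211, 223, 227, 229, 233, 239, 241, 251, 257, 263, 269, 271, 277, 281]
private def C1 : List Nat := [283, 293, 307, 311, 313, 317, 331, 337, 347, 349, 353, 359, 367, 373, 379, 383, 389, 397, 401, 409, 419, 421, 431, 433, 439, 443, 449, 457, 461, 463, 467, 479, 487, 491, 499, 503, 509, 521, 523, 541, 547, 557, 563, 569, 571, 577, 587, 593, 599, 601, 607, 613, 617, 619, 631, 641, 643, 647, 653, 659]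
private def C2 : List Nat := [661, 673, 677, 683, 691, 701, 709, 719, 727, 733, 739, 743, 751, 757, 761, 769, 773, 787, 797, 809, 811, 821, 823, 827, 829, 839, 853, 857, 859, 863, 877, 881, 883, 887, 907, 911, 919, 929, 937, 941, 947, 953, 967, 971, 977, 983, 991, 997, 1009, 1013, 1019, 1021, 1031, 1033, 1039, 1049, 1051, 1061, 1063, 1069]
private def C3 : List Nat := [1087, 1091, 1093, 1097, 1103, 1109, 1117, 1123, 1129, 1151, 1153, 1163, 1171, 1181, 1187, 1193, 1201, 1213, 1217, 1223, 1229, 1231, 1237, 1249, 1259, 1277, 1279, 1283, 1289, 1291, 1297, 1301, 1303, 1307, 1319, 1321, 1327, 1361, 1367, 1373, 1381, 1399, 1409, 1423, 1427, 1429, 1433, 1439, 1447, 1451, 1453, 1459, 1471, 1481, 1483, 1487, 1489, 1493, 1499, 1511]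
private def C4 : List Nat := [1523, 1531, 1543, 1549, 1553, 1559, 1567, 1571, 1579, 1583, 1597, 1601, 1607, 1609, 1613, 1619, 1621, 1627, 1637, 1657, 1663, 1667, 1669, 1693, 1697, 1699, 1709, 1721, 1723, 1733, 1741, 1747, 1753, 1759, 1777, 1783, 1787, 1789, 1801, 1811, 1823, 1831, 1847, 1861, 1867, 1871, 1873, 1877, 1879, 1889, 1901, 1907, 1913, 1931, 1933, 1949, 1951, 1973, 1979, 1987]
private def C5 : List Nat := [1993, 1997, 1999, 2003, 2011, 2017, 2027, 2029, 2039, 2053, 2063, 2069, 2081, 2083, 2087, 2089, 2099, 2111, 2113, 2129, 2131, 2137, 2141, 2143, 2153, 2161, 2179, 2203, 2207, 2213, 2221, 2237, 2239, 2243, 2251, 2267, 2269, 2273, 2281, 2287, 2293, 2297, 2309, 2311, 2333, 2339, 2341, 2347, 2351, 2357, 2371, 2377, 2381, 2383, 2389, 2393, 2399, 2411, 2417, 2423]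
private def C6 : List Nat := [2437, 2441, 2447, 2459, 2467, 2473, 2477, 2503, 2521, 2531, 2539, 2543, 2549, 2551, 2557, 2579, 2591, 2593, 2609, 2617, 2621, 2633, 2647, 2657, 2659, 2663, 2671, 2677, 2683, 2687, 2689, 2693, 2699, 2707, 2711, 2713, 2719, 2729, 2731, 2741, 2749, 2753, 2767, 2777, 2789, 2791, 2797, 2801, 2803, 2819, 2833, 2837, 2843, 2851, 2857, 2861, 2879, 2887, 2897, 2903]
private def C7 : List Nat := [2909, 2917, 2927, 2939, 2953, 2957, 2963, 2969, 2971, 2999, 3001, 3011, 3019, 3023, 3037, 3041, 3049, 3061, 3067, 3079, 3083, 3089, 3109, 3119, 3121, 3137, 3163, 3167, 3169, 3181, 3187, 3191, 3203, 3209, 3217, 3221, 3229, 3251, 3253, 3257, 3259, 3271, 3299, 3301, 3307, 3313, 3319, 3323, 3329, 3331, 3343, 3347, 3359, 3361, 3371, 3373, 3389, 3391, 3407, 3413]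
private def C8 : List Nat := [3433, 3449, 3457, 3461, 3463, 3467, 3469]
private def L : List Nat := C0 ++ C1 ++ C2 ++ C3 ++ C4 ++ C5 ++ C6 ++ C7 ++ C8

set_option maxHeartbeats 1000000 in
private theorem hC0 : ∀ p ∈ C0, Nat.Prime p := by norm_num [C0, List.forall_mem_cons]
set_option maxHeartbeats 1000000 in
private theorem hC1 : ∀ p ∈ C1, Nat.Prime p := by norm_num [C1, List.forall_mem_cons]
set_option maxHeartbeats 1000000 in
private theorem hC2 : ∀ p ∈ C2, Nat.Prime p := by norm_num [C2, List.forall_mem_cons]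
set_option maxHeartbeats 1000000 in
private theorem hC3 : ∀ p ∈ C3, Nat.Prime p := by norm_num [C3, List.forall_mem_cons]
set_option maxHeartbeats 1000000 in
private theorem hC4 : ∀ p ∈ C4, Nat.Prime p := by norm_num [C4, List.forall_mem_cons]
set_option maxHeartbeats 1000000 in
private theorem hC5 : ∀ p ∈ C5, Nat.Prime p := by norm_num [C5, List.forall_mem_cons]
set_option maxHeartbeats 1000000 in
private theorem hC6 : ∀ p ∈ C6, Nat.Prime p := by norm_num [C6, List.forall_mem_cons]
set_option maxHeartbeats 1000000 in
private theorem hC7 : ∀ p ∈ C7, Nat.Prime p := by norm_num [C7, List.forall_mem_cons]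
set_option maxHeartbeats 1000000 in
private theorem hC8 : ∀ p ∈ C8, Nat.Prime p := by norm_num [C8, List.forall_mem_cons]


private theorem hLprime : ∀ p ∈ L, Nat.Prime p := by
  simp only [L, List.mem_append]
  rintro p ((((((((h0|h1)|h2)|h3)|h4)|h5)|h6)|h7)|h8)
  · exact hC0 p h0
  · exact hC1 p h1
  · exact hC2 p h2
  · exact hC3 p h3
  · exact hC4 p h4
  · exact hC5 p h5
  · exact hC6 p h6
  · exact hC7 p h7
  · exact hC8 p h8

private def isIncr : List Nat → Bool
  | [] => true
  | [_] => true
  | a :: b :: t => a < b && isIncr (b :: t)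

private theorem isIncr_chain' : ∀ M : List Nat, isIncr M = true → List.Chain' (· < ·) M
  | [], _ => List.isChain_nil
  | [_], _ => List.isChain_singleton _
  | a :: b :: t, h => by
      simp only [isIncr, Bool.and_eq_true, decide_eq_true_eq] at h
      exact List.IsChain.cons_cons h.1 (isIncr_chain' (b :: t) h.2)

set_option maxRecDepth 8000 in
private theorem hLpw : List.Pairwise (· < ·) L := by
  have h : isIncr L = true := by decide
  exact List.isChain_iff_pairwise.mp (isIncr_chain' L h)

private theorem card_lower (n K : ℕ) (M : List ℕ) (hM : ∀ p ∈ M, Nat.Prime p)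
    (hpw : M.Pairwise (· < ·))
    (hmem : ∀ p ∈ M, n < p ∧ p ≤ n^2)
    (hlen : K ≤ M.length) :
    K ≤ ((Finset.Ioc n (n^2)).filter Nat.Prime).card := by
  have hnd : M.Nodup := hpw.imp (fun h => Nat.ne_of_lt h)
  have hsub : M.toFinset ⊆ (Finset.Ioc n (n^2)).filter Nat.Prime := by
    intro p hp
    have hpM := List.mem_toFinset.mp hp
    exact Finset.mem_filter.mpr ⟨Finset.mem_Ioc.mpr (hmem p hpM), hM p hpM⟩
  calc K ≤ M.length := hlen
    _ = M.toFinset.card := (List.toFinset_card_of_nodup hnd).symm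
    _ ≤ _ := Finset.card_le_card hsub

private theorem wrapper (n : ℕ) (hn : 1 < n)
    (key : ((n:ℝ)^2 - (n:ℝ)) * Real.log 2
      ≤ (((Finset.Ioc n (n^2)).filter Nat.Prime).card : ℝ) * (2 * Real.log n)) :
    ((n ^ 2 - n : ℝ)) / (2 * Real.logb 2 n) ≤
      (((Finset.Ioc n (n ^ 2)).filter Nat.Prime).card : ℝ) := by
  have hn1 : (1:ℝ) < (n:ℝ) := by exact_mod_cast hn
  have hlogn : 0 < Real.log n := Real.log_pos hn1
  have l2pos : 0 < Real.log 2 := Real.log_pos (by norm_num)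
  have hlogb : 0 < Real.logb 2 n := Real.logb_pos (by norm_num) hn1
  rw [div_le_iff₀ (by positivity)]
  have hlb : Real.logb 2 (n:ℝ) = Real.log n / Real.log 2 := by
    rw [← Real.log_div_log]
  rw [hlb]
  set c := (((Finset.Ioc n (n ^ 2)).filter Nat.Prime).card : ℝ) with hc
  calc (n:ℝ)^2 - n = ((n:ℝ)^2 - n) * Real.log 2 / Real.log 2 := by field_simp
    _ ≤ c * (2 * Real.log n) / Real.log 2 := by gcongr
    _ = c * (2 * (Real.log n / Real.log 2)) := by ring

private theorem base_red (n K : ℕ) (hn : 1 < n)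
    (hpow : 2^(n^2 - n) ≤ n^(2*K))
    (hK : K ≤ ((Finset.Ioc n (n^2)).filter Nat.Prime).card) :
    ((n ^ 2 - n : ℝ)) / (2 * Real.logb 2 n) ≤
      (((Finset.Ioc n (n ^ 2)).filter Nat.Prime).card : ℝ) := by
  apply wrapper n hn
  have hcast : ((2:ℝ))^((n^2 - n : ℕ)) ≤ ((n:ℝ))^(2*K) := by exact_mod_cast hpow
  have hlog := Real.log_le_log (by positivity) hcast
  rw [Real.log_pow, Real.log_pow] at hlog
  have hnn : n ≤ n^2 := Nat.le_self_pow (by norm_num) n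
  have hsub : ((n^2 - n : ℕ) : ℝ) = (n:ℝ)^2 - (n:ℝ) := by
    rw [Nat.cast_sub hnn]; push_cast; ring
  rw [hsub] at hlog
  have hKc : (K:ℝ) ≤ (((Finset.Ioc n (n^2)).filter Nat.Prime).card : ℝ) := by exact_mod_cast hK
  have hlogn : 0 ≤ Real.log n := Real.log_nonneg (by exact_mod_cast hn.le)
  push_cast at hlog
  nlinarith [hlog, hKc, hlogn]


noncomputable def T (q : ℕ) : ℝ := ∑ k ∈ Finset.Icc 1 q, Real.log k

lemma Icc_one_eq_Ioc (q : ℕ) : Finset.Icc 1 q = Finset.Ioc 0 q := by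
  ext d; simp [Nat.lt_iff_add_one_le]

lemma T_ident (q : ℕ) : T q = ∑ d ∈ Finset.Icc 1 q, Λ d * ((q / d : ℕ) : ℝ) := by
  unfold T
  have h1 : ∀ k ∈ Finset.Icc 1 q, Real.log k = ∑ d ∈ Finset.Icc 1 q, if d ∣ k then Λ d else 0 := by
    intro k hk
    simp only [Finset.mem_Icc] at hk
    rw [← ArithmeticFunction.vonMangoldt_sum (n := k)]
    rw [← Finset.sum_filter]
    congr 1
    ext d
    simp only [Nat.mem_divisors, Finset.mem_filter, Finset.mem_Icc]
    constructor
    · rintro ⟨hd, hk0⟩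
      exact ⟨⟨Nat.pos_of_dvd_of_pos hd (by omega), (Nat.le_of_dvd (by omega) hd).trans hk.2⟩, hd⟩
    · rintro ⟨_, hd⟩
      exact ⟨hd, by omega⟩
  rw [Finset.sum_congr rfl h1, Finset.sum_comm]
  refine Finset.sum_congr rfl fun d hd => ?_
  rw [← Finset.sum_filter, Finset.sum_const, Icc_one_eq_Ioc, Nat.Ioc_filter_dvd_card_eq_div]
  simp [mul_comm]


lemma log_ge_one_sub_inv {x : ℝ} (hx : 0 < x) : 1 - 1/x ≤ Real.log x := by
  have h := Real.log_le_sub_one_of_pos (x := 1/x) (by positivity)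
  rw [Real.log_div one_ne_zero (ne_of_gt hx), Real.log_one] at h
  nlinarith [h]

lemma T_succ (q : ℕ) : T (q + 1) = T q + Real.log (q + 1) := by
  unfold T
  rw [Finset.sum_Icc_succ_top (by omega)]
  push_cast; ring

lemma T_lb : ∀ q : ℕ, 1 ≤ q → (q : ℝ) * Real.log q - q + 1 ≤ T q := by
  intro q hq
  induction q, hq using Nat.le_induction with
  | base => simp [T]
  | succ q hq ih =>
    rw [T_succ]
    have hq0 : (0:ℝ) < q := by exact_mod_cast hq
    have hq1 : (0:ℝ) < (q:ℝ) + 1 := by linarith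
    have key : (q:ℝ) * (Real.log (q+1) - Real.log q) ≤ 1 := by
      rw [← Real.log_div (by positivity) (ne_of_gt hq0)]
      have := Real.log_le_sub_one_of_pos (x := ((q:ℝ)+1)/q) (by positivity)
      have h2 : ((q:ℝ)+1)/q - 1 = 1/q := by field_simp; ring
      rw [h2] at this
      calc (q:ℝ) * Real.log ((q+1)/q) ≤ (q:ℝ) * (1/q) := by
            exact mul_le_mul_of_nonneg_left this (le_of_lt hq0)
        _ = 1 := by field_simp
    push_cast
    nlinarith [ih]

lemma T_ub : ∀ q : ℕ, 1 ≤ q → T q ≤ (q : ℝ) * Real.log q - q + 1 + Real.log q := by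
  intro q hq
  induction q, hq using Nat.le_induction with
  | base => simp [T]
  | succ q hq ih =>
    rw [T_succ]
    have hq0 : (0:ℝ) < q := by exact_mod_cast hq
    have hq1 : (0:ℝ) < (q:ℝ) + 1 := by linarith
    have key : 1 ≤ ((q:ℝ) + 1) * (Real.log (q+1) - Real.log q) := by
      rw [← Real.log_div (by positivity) (ne_of_gt hq0)]
      have := log_ge_one_sub_inv (x := ((q:ℝ)+1)/q) (by positivity)
      have h2 : 1 - 1/(((q:ℝ)+1)/q) = 1/((q:ℝ)+1) := by field_simp; ring
      rw [h2] at this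
      calc (1:ℝ) = ((q:ℝ)+1) * (1/((q:ℝ)+1)) := by field_simp
        _ ≤ ((q:ℝ)+1) * Real.log ((q+1)/q) := by
            exact mul_le_mul_of_nonneg_left this (by linarith)
    push_cast
    nlinarith [ih]

-- extension: T (m/c) as a sum over Icc 1 m
lemma T_div (m c : ℕ) (hc : 1 ≤ c) :
    T (m / c) = ∑ d ∈ Finset.Icc 1 m, Λ d * ((m / (c * d) : ℕ) : ℝ) := by
  rw [T_ident]
  rw [Finset.sum_subset (Finset.Icc_subset_Icc_right (Nat.div_le_self m c))]
  · refine Finset.sum_congr rfl fun d hd => ?_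
    rw [Nat.div_div_eq_div_mul]
  · intro d hd hnot
    simp only [Finset.mem_Icc] at hd hnot
    have : m / c < d := by omega
    rw [Nat.div_eq_of_lt this]
    simp

lemma G_nat (q : ℕ) : q + q / 30 ≤ q / 2 + q / 3 + q / 5 + 1 := by
  have h30 := Nat.div_add_mod q 30
  set a := q / 30 with ha
  set b := q % 30 with hb
  have hb30 : b < 30 := Nat.mod_lt _ (by norm_num)
  have h2 : q / 2 = 15 * a + b / 2 := by omega
  have h3 : q / 3 = 10 * a + b / 3 := by omega
  have h5 : q / 5 = 6 * a + b / 5 := by omega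
  have hkey : b ≤ b / 2 + b / 3 + b / 5 + 1 := by interval_cases b <;> decide
  omega

lemma fmono {y x : ℝ} (h1 : 1 ≤ y) (hxy : y ≤ x) :
    y * Real.log y - y ≤ x * Real.log x - x := by
  have hy0 : 0 < y := by linarith
  have hx0 : 0 < x := by linarith
  have h1' : 1 ≤ x / y := (one_le_div hy0).mpr hxy
  have hlog := log_ge_one_sub_inv (x := x / y) (by positivity)
  have hxlog : x * Real.log (x / y) ≥ x - y := by
    have := mul_le_mul_of_nonneg_left hlog (le_of_lt hx0)
    have hxy' : x * (1 - 1/(x/y)) = x - y := by field_simp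
    nlinarith [this]
  have hdiv : Real.log (x / y) = Real.log x - Real.log y := Real.log_div (ne_of_gt hx0) (ne_of_gt hy0)
  have hlogy : 0 ≤ Real.log y := Real.log_nonneg h1
  nlinarith [mul_le_mul_of_nonneg_right hxy hlogy]

-- numeric bounds
lemma l3_bounds : 1.0952 ≤ Real.log 3 ∧ Real.log 3 ≤ 1.1023 := by
  have h2l := Real.log_two_gt_d9
  have h2u := Real.log_two_lt_d9
  have e9 : Real.log (9/8) = 2 * Real.log 3 - 3 * Real.log 2 := by
    rw [Real.log_div (by norm_num) (by norm_num)]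
    rw [show (9:ℝ) = 3^2 by norm_num, show (8:ℝ) = 2^3 by norm_num,
      Real.log_pow, Real.log_pow]
    push_cast; ring
  have h9u := Real.log_le_sub_one_of_pos (x := (9:ℝ)/8) (by norm_num)
  have h9l := log_ge_one_sub_inv (x := (9:ℝ)/8) (by norm_num)
  constructor <;> nlinarith [h9u, h9l]

lemma l5_bounds : 1.6073 ≤ Real.log 5 ∧ Real.log 5 ≤ 1.6118 := by
  have h2l := Real.log_two_gt_d9
  have h2u := Real.log_two_lt_d9
  have h3 := l3_bounds
  have e25 : Real.log (25/24) = 2 * Real.log 5 - 3 * Real.log 2 - Real.log 3 := by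
    rw [Real.log_div (by norm_num) (by norm_num)]
    rw [show (25:ℝ) = 5^2 by norm_num, show (24:ℝ) = 2^3 * 3 by norm_num,
      Real.log_mul (by norm_num) (by norm_num), Real.log_pow, Real.log_pow]
    push_cast; ring
  have hu := Real.log_le_sub_one_of_pos (x := (25:ℝ)/24) (by norm_num)
  have hl := log_ge_one_sub_inv (x := (25:ℝ)/24) (by norm_num)
  constructor <;> nlinarith [hu, hl, h3.1, h3.2]

lemma final_arith (N lnN l2 l3 l5 : ℝ) (hN : 60 ≤ N)
    (hln_u : lnN ≤ (2*l2+l3+l5) + N/60 - 1) (hln0 : 0 ≤ lnN)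
    (hl2a : 0.6931471803 ≤ l2) (hl2b : l2 ≤ 0.6931471808)
    (hl3a : 1.0952 ≤ l3) (hl3b : l3 ≤ 1.1023)
    (hl5a : 1.6073 ≤ l5) (hl5b : l5 ≤ 1.6118) :
    (N^2 - N) * l2 + N*lnN + N*(2*lnN) + 8*lnN + 1 ≤ ((7/15)*l2 + (3/10)*l3 + (1/6)*l5) * N^2 := by
  have hN0 : (0:ℝ) ≤ N := by linarith
  have key : lnN ≤ 3.1004 + N/60 := by linarith
  have hprod : N * lnN ≤ N * (3.1004 + N/60) := mul_le_mul_of_nonneg_left key hN0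
  have hsq : N^2 ≥ 60 * N := by nlinarith
  nlinarith [hprod, hsq, mul_le_mul_of_nonneg_right (le_of_lt (lt_of_lt_of_le (by norm_num : (0:ℝ) < 0.2267) (by nlinarith : (0.2267:ℝ) ≤ (7/15)*l2 + (3/10)*l3 + (1/6)*l5 - l2))) (sq_nonneg N)]

lemma E_lower (m : ℕ) (hm : 3600 ≤ m) :
    ((7/15) * Real.log 2 + (3/10) * Real.log 3 + (1/6) * Real.log 5) * m
      - 4 * Real.log m - 1
    ≤ T m - T (m/2) - T (m/3) - T (m/5) + T (m/30) := by
  have hx3600 : (3600 : ℝ) ≤ (m:ℝ) := by exact_mod_cast hm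
  set x : ℝ := (m:ℝ) with hxdef
  have hx0 : 0 < x := by linarith
  -- upper bounds for T(m/c), c = 2,3,5
  have key : ∀ c : ℕ, 2 ≤ c → c ≤ 30 →
      T (m/c) ≤ (x/c) * Real.log (x/c) - x/c + 1 + Real.log (x/c) := by
    intro c hc2 hc30
    have hc0 : 0 < c := by omega
    have h1 : 1 ≤ m / c := (Nat.one_le_div_iff hc0).mpr (by omega)
    have hy1 : (1:ℝ) ≤ ((m/c : ℕ) : ℝ) := by exact_mod_cast h1
    have hyx : ((m/c : ℕ) : ℝ) ≤ x / c := Nat.cast_div_le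
    have h2 := T_ub (m/c) h1
    have h3 := fmono hy1 hyx
    have h4 : Real.log ((m/c : ℕ) : ℝ) ≤ Real.log (x/c) := Real.log_le_log (by linarith) hyx
    linarith
  have k2 := key 2 (by norm_num) (by norm_num)
  have k3 := key 3 (by norm_num) (by norm_num)
  have k5 := key 5 (by norm_num) (by norm_num)
  norm_num at k2 k3 k5
  -- lower bound for T(m/30)
  have h130 : 1 ≤ m / 30 := (Nat.one_le_div_iff (by norm_num)).mpr (by omega)
  have hy30 : (1:ℝ) ≤ ((m/30 : ℕ) : ℝ) := by exact_mod_cast h130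
  have k30 : (x/30) * Real.log (x/30) - x/30 + 1 - Real.log (x/30) ≤ T (m/30) := by
    set y : ℝ := ((m/30 : ℕ) : ℝ) with hydef
    have hT := T_lb (m/30) h130
    have hyx : y ≤ x/30 := Nat.cast_div_le
    have hyx' : x/30 - 1 ≤ y := by
      have h1 := Nat.div_add_mod m 30
      have h2 : m % 30 < 30 := Nat.mod_lt _ (by norm_num)
      have : (m:ℝ) < 30 * y + 30 := by
        rw [hydef]; push_cast
        have : (m:ℝ) = 30 * ((m/30 : ℕ):ℝ) + ((m % 30 : ℕ):ℝ) := by exact_mod_cast h1.symm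
        rw [this]; push_cast
        have : ((m % 30 : ℕ):ℝ) < 30 := by exact_mod_cast h2
        linarith
      linarith
    have hx30 : (1:ℝ) ≤ x/30 := by linarith
    have hy0 : 0 < y := by linarith
    have hlog30 : 0 ≤ Real.log (x/30) := Real.log_nonneg hx30
    have ht : (1:ℝ) ≤ (x/30)/y := (one_le_div hy0).mpr hyx
    have hlt := Real.log_le_sub_one_of_pos (x := (x/30)/y) (by positivity)
    have hsplit : Real.log (x/30) = Real.log y + Real.log ((x/30)/y) := by
      rw [Real.log_div (by positivity) (ne_of_gt hy0)]; ring
    have hylt : y * Real.log ((x/30)/y) ≤ x/30 - y := by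
      have := mul_le_mul_of_nonneg_left hlt (le_of_lt hy0)
      have heq : y * ((x/30)/y - 1) = x/30 - y := by field_simp
      linarith [this, heq.le, heq.ge]
    -- x30 log x30 - y log y ≤ log x30 + (x30 - y)
    have hmain : (x/30) * Real.log (x/30) - y * Real.log y ≤ Real.log (x/30) + (x/30 - y) := by
      have e1 : (x/30) * Real.log (x/30) - y * Real.log y
          = (x/30 - y) * Real.log (x/30) + y * Real.log ((x/30)/y) := by
        rw [hsplit]; ring
      have e2 : (x/30 - y) * Real.log (x/30) ≤ 1 * Real.log (x/30) := by
        apply mul_le_mul_of_nonneg_right _ hlog30; linarith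
      linarith
    linarith
  -- combine
  have hTm := T_lb m (by omega)
  have l2 := Real.log_two_gt_d9
  have hl2 : 0 ≤ Real.log 2 := Real.log_nonneg (by norm_num)
  have hl3 : 0 ≤ Real.log 3 := Real.log_nonneg (by norm_num)
  have hl5 : 0 ≤ Real.log 5 := Real.log_nonneg (by norm_num)
  have e30 : Real.log 30 = Real.log 2 + Real.log 3 + Real.log 5 := by
    rw [show (30:ℝ) = 2*(3*5) by norm_num, Real.log_mul (by norm_num) (by norm_num),
      Real.log_mul (by norm_num) (by norm_num)]
    ring
  have d2 : Real.log (x/2) = Real.log x - Real.log 2 := Real.log_div (ne_of_gt hx0) (by norm_num)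
  have d3 : Real.log (x/3) = Real.log x - Real.log 3 := Real.log_div (ne_of_gt hx0) (by norm_num)
  have d5 : Real.log (x/5) = Real.log x - Real.log 5 := Real.log_div (ne_of_gt hx0) (by norm_num)
  have d30 : Real.log (x/30) = Real.log x - Real.log 30 := Real.log_div (ne_of_gt hx0) (by norm_num)
  rw [d2] at k2
  rw [d3] at k3
  rw [d5] at k5
  rw [d30, e30] at k30
  linarith [k2, k3, k5, k30, hTm]

theorem large_case (n : ℕ) (hn : 60 ≤ n) :
    ((n:ℝ)^2 - (n:ℝ)) * Real.log 2
      ≤ (((Finset.Ioc n (n^2)).filter Nat.Prime).card : ℝ) * (2 * Real.log n) := by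
  classical
  set m := n^2 with hm
  have hmn : 3600 ≤ m := by
    have := Nat.pow_le_pow_left hn 2
    simpa [hm] using this
  have hm0 : m ≠ 0 := by omega
  have hm1 : 1 ≤ m := by omega
  have hnm : n ≤ m := by rw [hm]; exact Nat.le_self_pow (by norm_num) n
  set k := ((Finset.Ioc n m).filter Nat.Prime).card with hkdef
  have hxeq : ((m:ℕ):ℝ) = (n:ℝ)^2 := by rw [hm]; push_cast; ring
  have hlogm : Real.log (m:ℝ) = 2 * Real.log n := by
    rw [hxeq, show ((n:ℝ))^2 = (n:ℝ)^(2:ℕ) by norm_num, Real.log_pow]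
    push_cast; ring
  have hlogn0 : 0 ≤ Real.log (n:ℝ) := Real.log_nonneg (by exact_mod_cast Nat.one_le_iff_ne_zero.mpr (by omega))
  have hlogm0 : 0 ≤ Real.log (m:ℝ) := by rw [hlogm]; positivity
  -- E as a single sum
  set G : ℕ → ℝ := fun d => ((m/d : ℕ) : ℝ) - ((m/(2*d) : ℕ) : ℝ) - ((m/(3*d) : ℕ) : ℝ)
      - ((m/(5*d) : ℕ) : ℝ) + ((m/(30*d) : ℕ) : ℝ) with hGdef
  have hE : T m - T (m/2) - T (m/3) - T (m/5) + T (m/30)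
      = ∑ d ∈ Finset.Icc 1 m, Λ d * G d := by
    rw [T_ident, T_div m 2 (by norm_num), T_div m 3 (by norm_num), T_div m 5 (by norm_num),
      T_div m 30 (by norm_num), ← Finset.sum_sub_distrib, ← Finset.sum_sub_distrib,
      ← Finset.sum_sub_distrib, ← Finset.sum_add_distrib]
    exact Finset.sum_congr rfl fun d _ => by rw [hGdef]; ring
  have hG_le : ∀ d : ℕ, G d ≤ 1 := by
    intro d
    have e2 : m/(2*d) = (m/d)/2 := by rw [Nat.div_div_eq_div_mul, Nat.mul_comm]
    have e3 : m/(3*d) = (m/d)/3 := by rw [Nat.div_div_eq_div_mul, Nat.mul_comm]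
    have e5 : m/(5*d) = (m/d)/5 := by rw [Nat.div_div_eq_div_mul, Nat.mul_comm]
    have e30 : m/(30*d) = (m/d)/30 := by rw [Nat.div_div_eq_div_mul, Nat.mul_comm]
    have hcast := (Nat.cast_le (α := ℝ)).mpr (G_nat (m/d))
    rw [hGdef]
    simp only [e2, e3, e5, e30]
    push_cast at hcast ⊢
    linarith
  have hE_le : T m - T (m/2) - T (m/3) - T (m/5) + T (m/30) ≤ ∑ d ∈ Finset.Icc 1 m, Λ d := by
    rw [hE]
    refine Finset.sum_le_sum fun d _ => ?_
    have h1 := hG_le d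
    have h0 : (0:ℝ) ≤ Λ d := vonMangoldt_nonneg
    nlinarith
  -- split the sum
  have hΛlogm : ∀ d ∈ Finset.Icc 1 m, Λ d ≤ Real.log (m:ℝ) := by
    intro d hd
    simp only [Finset.mem_Icc] at hd
    exact vonMangoldt_le_log.trans (Real.log_le_log (by exact_mod_cast hd.1) (by exact_mod_cast hd.2))
  have hsplit := Finset.sum_filter_add_sum_filter_not (Finset.Icc 1 m)
      (fun d => n < d ∧ d.Prime) (fun d => Λ d)
  set SA := (Finset.Icc 1 m).filter (fun d => n < d ∧ d.Prime) with hSAdef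
  set SR := (Finset.Icc 1 m).filter (fun d => ¬(n < d ∧ d.Prime)) with hSRdef
  have hSA_card : SA.card = k := by
    rw [hkdef, hSAdef]
    congr 1
    ext d
    simp only [Finset.mem_filter, Finset.mem_Icc, Finset.mem_Ioc]
    constructor
    · rintro ⟨⟨_, h2⟩, h3, h4⟩; exact ⟨⟨h3, h2⟩, h4⟩
    · rintro ⟨⟨h3, h2⟩, h4⟩; exact ⟨⟨by omega, h2⟩, h3, h4⟩
  have hSA : ∑ d ∈ SA, Λ d ≤ (k:ℝ) * Real.log (m:ℝ) := by
    calc ∑ d ∈ SA, Λ d ≤ SA.card • Real.log (m:ℝ) :=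
          Finset.sum_le_card_nsmul _ _ _ (fun d hd => hΛlogm d (Finset.mem_of_mem_filter d hd))
      _ = (k:ℝ) * Real.log (m:ℝ) := by rw [hSA_card, nsmul_eq_mul]
  have hsplit2 := Finset.sum_filter_add_sum_filter_not SR (fun d => d ≤ n) (fun d => Λ d)
  set SB1 := SR.filter (fun d => d ≤ n) with hSB1def
  set SB2 := SR.filter (fun d => ¬ d ≤ n) with hSB2def
  have hSB1 : ∑ d ∈ SB1, Λ d ≤ (n:ℝ) * Real.log (n:ℝ) := by
    have hsub : SB1 ⊆ Finset.Icc 1 n := by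
      intro d hd
      have h1 := Finset.mem_of_mem_filter d (Finset.mem_of_mem_filter d hd)
      have h2 := (Finset.mem_filter.mp hd).2
      simp only [Finset.mem_Icc] at h1 ⊢
      omega
    calc ∑ d ∈ SB1, Λ d ≤ ∑ d ∈ Finset.Icc 1 n, Λ d :=
          Finset.sum_le_sum_of_subset_of_nonneg hsub (fun _ _ _ => vonMangoldt_nonneg)
      _ ≤ (Finset.Icc 1 n).card • Real.log (n:ℝ) := by
          refine Finset.sum_le_card_nsmul _ _ _ (fun d hd => ?_)
          simp only [Finset.mem_Icc] at hd
          exact vonMangoldt_le_log.trans (Real.log_le_log (by exact_mod_cast hd.1) (by exact_mod_cast hd.2))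
      _ = (n:ℝ) * Real.log (n:ℝ) := by rw [Nat.card_Icc]; simp [nsmul_eq_mul]
  -- SB2
  have hSB2 : ∑ d ∈ SB2, Λ d ≤ (n:ℝ) * Real.log (m:ℝ) := by
    have hre : ∑ d ∈ SB2.filter IsPrimePow, Λ d = ∑ d ∈ SB2, Λ d := by
      refine Finset.sum_filter_of_ne fun d _ hΛ => ?_
      by_contra hnot
      exact hΛ (vonMangoldt_eq_zero_iff.mpr hnot)
    rw [← hre]
    set B := SB2.filter IsPrimePow with hBdef
    have hBfact : ∀ d ∈ B, ∃ p a : ℕ, p.Prime ∧ 2 ≤ a ∧ d = p ^ a ∧ p = d.minFac ∧ p ≤ n := by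
      intro d hd
      obtain ⟨hd2, hpp⟩ := Finset.mem_filter.mp hd
      have hdIcc := Finset.mem_of_mem_filter d (Finset.mem_of_mem_filter d hd2)
      simp only [Finset.mem_Icc] at hdIcc
      have hdn : ¬ d ≤ n := (Finset.mem_filter.mp hd2).2
      have hnp : ¬ d.Prime := by
        have h := (Finset.mem_filter.mp (Finset.mem_of_mem_filter d hd2)).2
        push_neg at h
        exact h (by omega)
      obtain ⟨p, a, hp, ha, rfl⟩ := hpp
      have hpn : p.Prime := Nat.prime_iff.mpr hp
      have ha2 : 2 ≤ a := by
        by_contra h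
        push_neg at h
        interval_cases a
        rw [pow_one] at hnp; exact hnp hpn
      refine ⟨p, a, hpn, ha2, rfl, ?_, ?_⟩
      · rw [Nat.pow_minFac (by omega : a ≠ 0), hpn.minFac_eq]
      · have h1 : p^2 ≤ p^a := Nat.pow_le_pow_right (le_of_lt hpn.one_lt) ha2
        have h2 : p^2 ≤ n^2 := le_trans h1 (by omega)
        exact (Nat.pow_le_pow_iff_left (by norm_num)).mp h2
    have hmap : ∀ d ∈ B, d.minFac ∈ Finset.Icc 2 n := by
      intro d hd
      obtain ⟨p, a, hp, ha, hdeq, hpm, hpn⟩ := hBfact d hd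
      rw [← hpm]
      exact Finset.mem_Icc.mpr ⟨hp.two_le, hpn⟩
    rw [← Finset.sum_fiberwise_of_maps_to hmap]
    have hinner : ∀ p ∈ Finset.Icc 2 n,
        ∑ d ∈ B.filter (fun d => d.minFac = p), Λ d ≤ Real.log (m:ℝ) := by
      intro p hp
      set F := B.filter (fun d => d.minFac = p) with hFdef
      have hp2 : 2 ≤ p := (Finset.mem_Icc.mp hp).1
      have hΛconst : ∀ d ∈ F, Λ d = Real.log p := by
        intro d hd
        obtain ⟨hdB, hdm⟩ := Finset.mem_filter.mp hd
        obtain ⟨q, a, hq, ha, hdeq, hqm, _⟩ := hBfact d hdB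
        have hqp : q = p := by rw [hqm, hdm]
        rw [hdeq, vonMangoldt_apply_pow (by omega : a ≠ 0), vonMangoldt_apply_prime hq, hqp]
      have hcard : F.card ≤ Nat.log p m := by
        have h : F.card ≤ (Finset.Icc 2 (Nat.log p m)).card := by
          apply Finset.card_le_card_of_injOn (fun d => d.factorization p)
          · intro d hd
            obtain ⟨hdB, hdm⟩ := Finset.mem_filter.mp hd
            obtain ⟨q, a, hq, ha, hdeq, hqm, _⟩ := hBfact d hdB
            have hqp : q = p := by rw [hqm, hdm]
            have hfa : d.factorization p = a := by
              rw [hdeq, ← hqp, Nat.Prime.factorization_pow hq]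
              simp
            simp only [hfa, Finset.mem_coe]
            refine Finset.mem_Icc.mpr ⟨ha, ?_⟩
            have hdle : d ≤ m := by
              have := Finset.mem_of_mem_filter d (Finset.mem_of_mem_filter d
                (Finset.mem_of_mem_filter d hdB))
              exact (Finset.mem_Icc.mp this).2
            rw [Nat.le_log_iff_pow_le (by omega) hm0, ← hqp, ← hdeq]
            exact hdle
          · intro d1 h1 d2 h2 heq
            obtain ⟨hdB1, hdm1⟩ := Finset.mem_filter.mp (Finset.mem_coe.mp h1)
            obtain ⟨q1, a1, hq1, ha1, hdeq1, hqm1, _⟩ := hBfact d1 hdB1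
            obtain ⟨hdB2, hdm2⟩ := Finset.mem_filter.mp (Finset.mem_coe.mp h2)
            obtain ⟨q2, a2, hq2, ha2', hdeq2, hqm2, _⟩ := hBfact d2 hdB2
            have hq1p : q1 = p := by rw [hqm1, hdm1]
            have hq2p : q2 = p := by rw [hqm2, hdm2]
            have hfa1 : d1.factorization p = a1 := by
              rw [hdeq1, ← hq1p, Nat.Prime.factorization_pow hq1]; simp
            have hfa2 : d2.factorization p = a2 := by
              rw [hdeq2, ← hq2p, Nat.Prime.factorization_pow hq2]; simp
            simp only at heq
            rw [hdeq1, hdeq2, hq1p, hq2p, ← hfa1, ← hfa2, heq]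
        rw [Nat.card_Icc] at h; omega
      calc ∑ d ∈ F, Λ d = F.card * Real.log p := by
            rw [Finset.sum_congr rfl hΛconst, Finset.sum_const, nsmul_eq_mul]
        _ ≤ (Nat.log p m : ℝ) * Real.log p := by
            have hlp : 0 ≤ Real.log p := Real.log_nonneg (by exact_mod_cast by omega : (1:ℝ) ≤ (p:ℝ))
            exact mul_le_mul_of_nonneg_right (by exact_mod_cast hcard) hlp
        _ = Real.log ((p:ℝ) ^ (Nat.log p m)) := (Real.log_pow _ _).symm
        _ ≤ Real.log (m:ℝ) := by
            apply Real.log_le_log (by positivity)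
            exact_mod_cast Nat.pow_log_le_self p hm0
    calc ∑ p ∈ Finset.Icc 2 n, ∑ d ∈ B.filter (fun d => d.minFac = p), Λ d
        ≤ ∑ _p ∈ Finset.Icc 2 n, Real.log (m:ℝ) := Finset.sum_le_sum hinner
      _ = ((Finset.Icc 2 n).card : ℝ) * Real.log (m:ℝ) := by rw [Finset.sum_const, nsmul_eq_mul]
      _ ≤ (n:ℝ) * Real.log (m:ℝ) := by
          apply mul_le_mul_of_nonneg_right _ hlogm0
          rw [Nat.card_Icc]
          have : n + 1 - 2 ≤ n := by omega
          exact_mod_cast this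
  -- assemble
  have hEl := E_lower m hmn
  have hchain : ((7/15) * Real.log 2 + (3/10) * Real.log 3 + (1/6) * Real.log 5) * (m:ℝ)
      - 4 * Real.log (m:ℝ) - 1 ≤ (k:ℝ) * Real.log (m:ℝ) + (n:ℝ) * Real.log (n:ℝ)
        + (n:ℝ) * Real.log (m:ℝ) := by
    have := hE_le
    linarith [hsplit, hsplit2, hSA, hSB1, hSB2, hEl]
  -- numeric finish
  have hl2a := Real.log_two_gt_d9
  have hl2b := Real.log_two_lt_d9
  have h3 := l3_bounds
  have h5 := l5_bounds
  have hln_u : Real.log (n:ℝ) ≤ (2*Real.log 2 + Real.log 3 + Real.log 5) + (n:ℝ)/60 - 1 := by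
    have h60 : Real.log 60 = 2*Real.log 2 + Real.log 3 + Real.log 5 := by
      rw [show (60:ℝ) = 2^(2:ℕ)*(3*5) by norm_num, Real.log_mul (by norm_num) (by norm_num),
        Real.log_mul (by norm_num) (by norm_num), Real.log_pow]
      push_cast; ring
    have hd : Real.log ((n:ℝ)/60) = Real.log (n:ℝ) - Real.log 60 := by
      rw [Real.log_div (by positivity) (by norm_num)]
    have := Real.log_le_sub_one_of_pos (x := (n:ℝ)/60) (by positivity)
    rw [hd, h60] at this
    linarith
  have hfin := final_arith (n:ℝ) (Real.log (n:ℝ)) (Real.log 2) (Real.log 3) (Real.log 5)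
    (by exact_mod_cast hn) hln_u hlogn0 (le_of_lt hl2a) (le_of_lt hl2b) h3.1 h3.2 h5.1 h5.2
  have hm2 : ((m:ℕ):ℝ) = (n:ℝ)^2 := hxeq
  rw [hlogm, hm2] at hchain
  nlinarith [hchain, hfin]


set_option maxRecDepth 8000 in
set_option maxHeartbeats 1000000 in
/-- For every integer `n > 1`, the number of primes in the interval `(n, n²]`
is at least `(n² − n)/(2 log₂ n)`. -/
theorem primes_in_Ioc_ge (n : ℕ) (hn : 1 < n) :
    ((n ^ 2 - n : ℝ)) / (2 * Real.logb 2 n) ≤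
      (((Finset.Ioc n (n ^ 2)).filter Nat.Prime).card : ℝ) := by
  by_cases h60 : 60 ≤ n
  · exact wrapper n hn (large_case n h60)
  · have h : n < 60 := by omega
    interval_cases n
    · exact base_red 2 1 (by norm_num) (by norm_num)
        (card_lower 2 1 (L.filter (fun p => decide (2 < p) && decide (p ≤ 2^2)))
          (fun p hp => hLprime p (List.mem_of_mem_filter hp))
          (List.Pairwise.sublist List.filter_sublist hLpw)
          (fun p hp => by
            have h := List.of_mem_filter hp
            simp only [Bool.and_eq_true, decide_eq_true_eq] at h
            exact h)
          (by decide))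
    · exact base_red 3 2 (by norm_num) (by norm_num)
        (card_lower 3 2 (L.filter (fun p => decide (3 < p) && decide (p ≤ 3^2)))
          (fun p hp => hLprime p (List.mem_of_mem_filter hp))
          (List.Pairwise.sublist List.filter_sublist hLpw)
          (fun p hp => by
            have h := List.of_mem_filter hp
            simp only [Bool.and_eq_true, decide_eq_true_eq] at h
            exact h)
          (by decide))
    · exact base_red 4 4 (by norm_num) (by norm_num)
        (card_lower 4 4 (L.filter (fun p => decide (4 < p) && decide (p ≤ 4^2)))
          (fun p hp => hLprime p (List.mem_of_mem_filter hp))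
          (List.Pairwise.sublist List.filter_sublist hLpw)
          (fun p hp => by
            have h := List.of_mem_filter hp
            simp only [Bool.and_eq_true, decide_eq_true_eq] at h
            exact h)
          (by decide))
    · exact base_red 5 6 (by norm_num) (by norm_num)
        (card_lower 5 6 (L.filter (fun p => decide (5 < p) && decide (p ≤ 5^2)))
          (fun p hp => hLprime p (List.mem_of_mem_filter hp))
          (List.Pairwise.sublist List.filter_sublist hLpw)
          (fun p hp => by
            have h := List.of_mem_filter hp
            simp only [Bool.and_eq_true, decide_eq_true_eq] at h
            exact h)
          (by decide))
    · exact base_red 6 8 (by norm_num) (by norm_num)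
        (card_lower 6 8 (L.filter (fun p => decide (6 < p) && decide (p ≤ 6^2)))
          (fun p hp => hLprime p (List.mem_of_mem_filter hp))
          (List.Pairwise.sublist List.filter_sublist hLpw)
          (fun p hp => by
            have h := List.of_mem_filter hp
            simp only [Bool.and_eq_true, decide_eq_true_eq] at h
            exact h)
          (by decide))
    · exact base_red 7 11 (by norm_num) (by norm_num)
        (card_lower 7 11 (L.filter (fun p => decide (7 < p) && decide (p ≤ 7^2)))
          (fun p hp => hLprime p (List.mem_of_mem_filter hp))
          (List.Pairwise.sublist List.filter_sublist hLpw)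
          (fun p hp => by
            have h := List.of_mem_filter hp
            simp only [Bool.and_eq_true, decide_eq_true_eq] at h
            exact h)
          (by decide))
    · exact base_red 8 14 (by norm_num) (by norm_num)
        (card_lower 8 14 (L.filter (fun p => decide (8 < p) && decide (p ≤ 8^2)))
          (fun p hp => hLprime p (List.mem_of_mem_filter hp))
          (List.Pairwise.sublist List.filter_sublist hLpw)
          (fun p hp => by
            have h := List.of_mem_filter hp
            simp only [Bool.and_eq_true, decide_eq_true_eq] at h
            exact h)
          (by decide))
    · exact base_red 9 18 (by norm_num) (by norm_num)
        (card_lower 9 18 (L.filter (fun p => decide (9 < p) && decide (p ≤ 9^2)))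
          (fun p hp => hLprime p (List.mem_of_mem_filter hp))
          (List.Pairwise.sublist List.filter_sublist hLpw)
          (fun p hp => by
            have h := List.of_mem_filter hp
            simp only [Bool.and_eq_true, decide_eq_true_eq] at h
            exact h)
          (by decide))
    · exact base_red 10 21 (by norm_num) (by norm_num)
        (card_lower 10 21 (L.filter (fun p => decide (10 < p) && decide (p ≤ 10^2)))
          (fun p hp => hLprime p (List.mem_of_mem_filter hp))
          (List.Pairwise.sublist List.filter_sublist hLpw)
          (fun p hp => by
            have h := List.of_mem_filter hp
            simp only [Bool.and_eq_true, decide_eq_true_eq] at h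
            exact h)
          (by decide))
    · exact base_red 11 25 (by norm_num) (by norm_num)
        (card_lower 11 25 (L.filter (fun p => decide (11 < p) && decide (p ≤ 11^2)))
          (fun p hp => hLprime p (List.mem_of_mem_filter hp))
          (List.Pairwise.sublist List.filter_sublist hLpw)
          (fun p hp => by
            have h := List.of_mem_filter hp
            simp only [Bool.and_eq_true, decide_eq_true_eq] at h
            exact h)
          (by decide))
    · exact base_red 12 29 (by norm_num) (by norm_num)
        (card_lower 12 29 (L.filter (fun p => decide (12 < p) && decide (p ≤ 12^2)))
          (fun p hp => hLprime p (List.mem_of_mem_filter hp))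
          (List.Pairwise.sublist List.filter_sublist hLpw)
          (fun p hp => by
            have h := List.of_mem_filter hp
            simp only [Bool.and_eq_true, decide_eq_true_eq] at h
            exact h)
          (by decide))
    · exact base_red 13 33 (by norm_num) (by norm_num)
        (card_lower 13 33 (L.filter (fun p => decide (13 < p) && decide (p ≤ 13^2)))
          (fun p hp => hLprime p (List.mem_of_mem_filter hp))
          (List.Pairwise.sublist List.filter_sublist hLpw)
          (fun p hp => by
            have h := List.of_mem_filter hp
            simp only [Bool.and_eq_true, decide_eq_true_eq] at h
            exact h)
          (by decide))
    · exact base_red 14 38 (by norm_num) (by norm_num)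
        (card_lower 14 38 (L.filter (fun p => decide (14 < p) && decide (p ≤ 14^2)))
          (fun p hp => hLprime p (List.mem_of_mem_filter hp))
          (List.Pairwise.sublist List.filter_sublist hLpw)
          (fun p hp => by
            have h := List.of_mem_filter hp
            simp only [Bool.and_eq_true, decide_eq_true_eq] at h
            exact h)
          (by decide))
    · exact base_red 15 42 (by norm_num) (by norm_num)
        (card_lower 15 42 (L.filter (fun p => decide (15 < p) && decide (p ≤ 15^2)))
          (fun p hp => hLprime p (List.mem_of_mem_filter hp))
          (List.Pairwise.sublist List.filter_sublist hLpw)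
          (fun p hp => by
            have h := List.of_mem_filter hp
            simp only [Bool.and_eq_true, decide_eq_true_eq] at h
            exact h)
          (by decide))
    · exact base_red 16 48 (by norm_num) (by norm_num)
        (card_lower 16 48 (L.filter (fun p => decide (16 < p) && decide (p ≤ 16^2)))
          (fun p hp => hLprime p (List.mem_of_mem_filter hp))
          (List.Pairwise.sublist List.filter_sublist hLpw)
          (fun p hp => by
            have h := List.of_mem_filter hp
            simp only [Bool.and_eq_true, decide_eq_true_eq] at h
            exact h)
          (by decide))
    · exact base_red 17 54 (by norm_num) (by decide)
        (card_lower 17 54 (L.filter (fun p => decide (17 < p) && decide (p ≤ 17^2)))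
          (fun p hp => hLprime p (List.mem_of_mem_filter hp))
          (List.Pairwise.sublist List.filter_sublist hLpw)
          (fun p hp => by
            have h := List.of_mem_filter hp
            simp only [Bool.and_eq_true, decide_eq_true_eq] at h
            exact h)
          (by decide))
    · exact base_red 18 59 (by norm_num) (by decide)
        (card_lower 18 59 (L.filter (fun p => decide (18 < p) && decide (p ≤ 18^2)))
          (fun p hp => hLprime p (List.mem_of_mem_filter hp))
          (List.Pairwise.sublist List.filter_sublist hLpw)
          (fun p hp => by
            have h := List.of_mem_filter hp
            simp only [Bool.and_eq_true, decide_eq_true_eq] at h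
            exact h)
          (by decide))
    · exact base_red 19 64 (by norm_num) (by decide)
        (card_lower 19 64 (L.filter (fun p => decide (19 < p) && decide (p ≤ 19^2)))
          (fun p hp => hLprime p (List.mem_of_mem_filter hp))
          (List.Pairwise.sublist List.filter_sublist hLpw)
          (fun p hp => by
            have h := List.of_mem_filter hp
            simp only [Bool.and_eq_true, decide_eq_true_eq] at h
            exact h)
          (by decide))
    · exact base_red 20 70 (by norm_num) (by decide)
        (card_lower 20 70 (L.filter (fun p => decide (20 < p) && decide (p ≤ 20^2)))
          (fun p hp => hLprime p (List.mem_of_mem_filter hp))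
          (List.Pairwise.sublist List.filter_sublist hLpw)
          (fun p hp => by
            have h := List.of_mem_filter hp
            simp only [Bool.and_eq_true, decide_eq_true_eq] at h
            exact h)
          (by decide))
    · exact base_red 21 77 (by norm_num) (by decide)
        (card_lower 21 77 (L.filter (fun p => decide (21 < p) && decide (p ≤ 21^2)))
          (fun p hp => hLprime p (List.mem_of_mem_filter hp))
          (List.Pairwise.sublist List.filter_sublist hLpw)
          (fun p hp => by
            have h := List.of_mem_filter hp
            simp only [Bool.and_eq_true, decide_eq_true_eq] at h
            exact h)
          (by decide))
    · exact base_red 22 84 (by norm_num) (by decide)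
        (card_lower 22 84 (L.filter (fun p => decide (22 < p) && decide (p ≤ 22^2)))
          (fun p hp => hLprime p (List.mem_of_mem_filter hp))
          (List.Pairwise.sublist List.filter_sublist hLpw)
          (fun p hp => by
            have h := List.of_mem_filter hp
            simp only [Bool.and_eq_true, decide_eq_true_eq] at h
            exact h)
          (by decide))
    · exact base_red 23 90 (by norm_num) (by decide)
        (card_lower 23 90 (L.filter (fun p => decide (23 < p) && decide (p ≤ 23^2)))
          (fun p hp => hLprime p (List.mem_of_mem_filter hp))
          (List.Pairwise.sublist List.filter_sublist hLpw)
          (fun p hp => by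
            have h := List.of_mem_filter hp
            simp only [Bool.and_eq_true, decide_eq_true_eq] at h
            exact h)
          (by decide))
    · exact base_red 24 96 (by norm_num) (by decide)
        (card_lower 24 96 (L.filter (fun p => decide (24 < p) && decide (p ≤ 24^2)))
          (fun p hp => hLprime p (List.mem_of_mem_filter hp))
          (List.Pairwise.sublist List.filter_sublist hLpw)
          (fun p hp => by
            have h := List.of_mem_filter hp
            simp only [Bool.and_eq_true, decide_eq_true_eq] at h
            exact h)
          (by decide))
    · exact base_red 25 105 (by norm_num) (by decide)
        (card_lower 25 105 (L.filter (fun p => decide (25 < p) && decide (p ≤ 25^2)))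
          (fun p hp => hLprime p (List.mem_of_mem_filter hp))
          (List.Pairwise.sublist List.filter_sublist hLpw)
          (fun p hp => by
            have h := List.of_mem_filter hp
            simp only [Bool.and_eq_true, decide_eq_true_eq] at h
            exact h)
          (by decide))
    · exact base_red 26 113 (by norm_num) (by decide)
        (card_lower 26 113 (L.filter (fun p => decide (26 < p) && decide (p ≤ 26^2)))
          (fun p hp => hLprime p (List.mem_of_mem_filter hp))
          (List.Pairwise.sublist List.filter_sublist hLpw)
          (fun p hp => by
            have h := List.of_mem_filter hp
            simp only [Bool.and_eq_true, decide_eq_true_eq] at h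
            exact h)
          (by decide))
    · exact base_red 27 120 (by norm_num) (by decide)
        (card_lower 27 120 (L.filter (fun p => decide (27 < p) && decide (p ≤ 27^2)))
          (fun p hp => hLprime p (List.mem_of_mem_filter hp))
          (List.Pairwise.sublist List.filter_sublist hLpw)
          (fun p hp => by
            have h := List.of_mem_filter hp
            simp only [Bool.and_eq_true, decide_eq_true_eq] at h
            exact h)
          (by decide))
    · exact base_red 28 128 (by norm_num) (by decide)
        (card_lower 28 128 (L.filter (fun p => decide (28 < p) && decide (p ≤ 28^2)))
          (fun p hp => hLprime p (List.mem_of_mem_filter hp))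
          (List.Pairwise.sublist List.filter_sublist hLpw)
          (fun p hp => by
            have h := List.of_mem_filter hp
            simp only [Bool.and_eq_true, decide_eq_true_eq] at h
            exact h)
          (by decide))
    · exact base_red 29 136 (by norm_num) (by decide)
        (card_lower 29 136 (L.filter (fun p => decide (29 < p) && decide (p ≤ 29^2)))
          (fun p hp => hLprime p (List.mem_of_mem_filter hp))
          (List.Pairwise.sublist List.filter_sublist hLpw)
          (fun p hp => by
            have h := List.of_mem_filter hp
            simp only [Bool.and_eq_true, decide_eq_true_eq] at h
            exact h)
          (by decide))
    · exact base_red 30 144 (by norm_num) (by decide)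
        (card_lower 30 144 (L.filter (fun p => decide (30 < p) && decide (p ≤ 30^2)))
          (fun p hp => hLprime p (List.mem_of_mem_filter hp))
          (List.Pairwise.sublist List.filter_sublist hLpw)
          (fun p hp => by
            have h := List.of_mem_filter hp
            simp only [Bool.and_eq_true, decide_eq_true_eq] at h
            exact h)
          (by decide))
    · exact base_red 31 151 (by norm_num) (by decide)
        (card_lower 31 151 (L.filter (fun p => decide (31 < p) && decide (p ≤ 31^2)))
          (fun p hp => hLprime p (List.mem_of_mem_filter hp))
          (List.Pairwise.sublist List.filter_sublist hLpw)
          (fun p hp => by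
            have h := List.of_mem_filter hp
            simp only [Bool.and_eq_true, decide_eq_true_eq] at h
            exact h)
          (by decide))
    · exact base_red 32 161 (by norm_num) (by decide)
        (card_lower 32 161 (L.filter (fun p => decide (32 < p) && decide (p ≤ 32^2)))
          (fun p hp => hLprime p (List.mem_of_mem_filter hp))
          (List.Pairwise.sublist List.filter_sublist hLpw)
          (fun p hp => by
            have h := List.of_mem_filter hp
            simp only [Bool.and_eq_true, decide_eq_true_eq] at h
            exact h)
          (by decide))
    · exact base_red 33 170 (by norm_num) (by decide)
        (card_lower 33 170 (L.filter (fun p => decide (33 < p) && decide (p ≤ 33^2)))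
          (fun p hp => hLprime p (List.mem_of_mem_filter hp))
          (List.Pairwise.sublist List.filter_sublist hLpw)
          (fun p hp => by
            have h := List.of_mem_filter hp
            simp only [Bool.and_eq_true, decide_eq_true_eq] at h
            exact h)
          (by decide))
    · exact base_red 34 180 (by norm_num) (by decide)
        (card_lower 34 180 (L.filter (fun p => decide (34 < p) && decide (p ≤ 34^2)))
          (fun p hp => hLprime p (List.mem_of_mem_filter hp))
          (List.Pairwise.sublist List.filter_sublist hLpw)
          (fun p hp => by
            have h := List.of_mem_filter hp
            simp only [Bool.and_eq_true, decide_eq_true_eq] at h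
            exact h)
          (by decide))
    · exact base_red 35 189 (by norm_num) (by decide)
        (card_lower 35 189 (L.filter (fun p => decide (35 < p) && decide (p ≤ 35^2)))
          (fun p hp => hLprime p (List.mem_of_mem_filter hp))
          (List.Pairwise.sublist List.filter_sublist hLpw)
          (fun p hp => by
            have h := List.of_mem_filter hp
            simp only [Bool.and_eq_true, decide_eq_true_eq] at h
            exact h)
          (by decide))
    · exact base_red 36 199 (by norm_num) (by decide)
        (card_lower 36 199 (L.filter (fun p => decide (36 < p) && decide (p ≤ 36^2)))
          (fun p hp => hLprime p (List.mem_of_mem_filter hp))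
          (List.Pairwise.sublist List.filter_sublist hLpw)
          (fun p hp => by
            have h := List.of_mem_filter hp
            simp only [Bool.and_eq_true, decide_eq_true_eq] at h
            exact h)
          (by decide))
    · exact base_red 37 207 (by norm_num) (by decide)
        (card_lower 37 207 (L.filter (fun p => decide (37 < p) && decide (p ≤ 37^2)))
          (fun p hp => hLprime p (List.mem_of_mem_filter hp))
          (List.Pairwise.sublist List.filter_sublist hLpw)
          (fun p hp => by
            have h := List.of_mem_filter hp
            simp only [Bool.and_eq_true, decide_eq_true_eq] at h
            exact h)
          (by decide))
    · exact base_red 38 216 (by norm_num) (by decide)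
        (card_lower 38 216 (L.filter (fun p => decide (38 < p) && decide (p ≤ 38^2)))
          (fun p hp => hLprime p (List.mem_of_mem_filter hp))
          (List.Pairwise.sublist List.filter_sublist hLpw)
          (fun p hp => by
            have h := List.of_mem_filter hp
            simp only [Bool.and_eq_true, decide_eq_true_eq] at h
            exact h)
          (by decide))
    · exact base_red 39 228 (by norm_num) (by decide)
        (card_lower 39 228 (L.filter (fun p => decide (39 < p) && decide (p ≤ 39^2)))
          (fun p hp => hLprime p (List.mem_of_mem_filter hp))
          (List.Pairwise.sublist List.filter_sublist hLpw)
          (fun p hp => by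
            have h := List.of_mem_filter hp
            simp only [Bool.and_eq_true, decide_eq_true_eq] at h
            exact h)
          (by decide))
    · exact base_red 40 239 (by norm_num) (by decide)
        (card_lower 40 239 (L.filter (fun p => decide (40 < p) && decide (p ≤ 40^2)))
          (fun p hp => hLprime p (List.mem_of_mem_filter hp))
          (List.Pairwise.sublist List.filter_sublist hLpw)
          (fun p hp => by
            have h := List.of_mem_filter hp
            simp only [Bool.and_eq_true, decide_eq_true_eq] at h
            exact h)
          (by decide))
    · exact base_red 41 250 (by norm_num) (by decide)
        (card_lower 41 250 (L.filter (fun p => decide (41 < p) && decide (p ≤ 41^2)))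
          (fun p hp => hLprime p (List.mem_of_mem_filter hp))
          (List.Pairwise.sublist List.filter_sublist hLpw)
          (fun p hp => by
            have h := List.of_mem_filter hp
            simp only [Bool.and_eq_true, decide_eq_true_eq] at h
            exact h)
          (by decide))
    · exact base_red 42 261 (by norm_num) (by decide)
        (card_lower 42 261 (L.filter (fun p => decide (42 < p) && decide (p ≤ 42^2)))
          (fun p hp => hLprime p (List.mem_of_mem_filter hp))
          (List.Pairwise.sublist List.filter_sublist hLpw)
          (fun p hp => by
            have h := List.of_mem_filter hp
            simp only [Bool.and_eq_true, decide_eq_true_eq] at h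
            exact h)
          (by decide))
    · exact base_red 43 269 (by norm_num) (by decide)
        (card_lower 43 269 (L.filter (fun p => decide (43 < p) && decide (p ≤ 43^2)))
          (fun p hp => hLprime p (List.mem_of_mem_filter hp))
          (List.Pairwise.sublist List.filter_sublist hLpw)
          (fun p hp => by
            have h := List.of_mem_filter hp
            simp only [Bool.and_eq_true, decide_eq_true_eq] at h
            exact h)
          (by decide))
    · exact base_red 44 281 (by norm_num) (by decide)
        (card_lower 44 281 (L.filter (fun p => decide (44 < p) && decide (p ≤ 44^2)))
          (fun p hp => hLprime p (List.mem_of_mem_filter hp))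
          (List.Pairwise.sublist List.filter_sublist hLpw)
          (fun p hp => by
            have h := List.of_mem_filter hp
            simp only [Bool.and_eq_true, decide_eq_true_eq] at h
            exact h)
          (by decide))
    · exact base_red 45 292 (by norm_num) (by decide)
        (card_lower 45 292 (L.filter (fun p => decide (45 < p) && decide (p ≤ 45^2)))
          (fun p hp => hLprime p (List.mem_of_mem_filter hp))
          (List.Pairwise.sublist List.filter_sublist hLpw)
          (fun p hp => by
            have h := List.of_mem_filter hp
            simp only [Bool.and_eq_true, decide_eq_true_eq] at h
            exact h)
          (by decide))
    · exact base_red 46 305 (by norm_num) (by decide)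
        (card_lower 46 305 (L.filter (fun p => decide (46 < p) && decide (p ≤ 46^2)))
          (fun p hp => hLprime p (List.mem_of_mem_filter hp))
          (List.Pairwise.sublist List.filter_sublist hLpw)
          (fun p hp => by
            have h := List.of_mem_filter hp
            simp only [Bool.and_eq_true, decide_eq_true_eq] at h
            exact h)
          (by decide))
    · exact base_red 47 314 (by norm_num) (by decide)
        (card_lower 47 314 (L.filter (fun p => decide (47 < p) && decide (p ≤ 47^2)))
          (fun p hp => hLprime p (List.mem_of_mem_filter hp))
          (List.Pairwise.sublist List.filter_sublist hLpw)
          (fun p hp => by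
            have h := List.of_mem_filter hp
            simp only [Bool.and_eq_true, decide_eq_true_eq] at h
            exact h)
          (by decide))
    · exact base_red 48 327 (by norm_num) (by decide)
        (card_lower 48 327 (L.filter (fun p => decide (48 < p) && decide (p ≤ 48^2)))
          (fun p hp => hLprime p (List.mem_of_mem_filter hp))
          (List.Pairwise.sublist List.filter_sublist hLpw)
          (fun p hp => by
            have h := List.of_mem_filter hp
            simp only [Bool.and_eq_true, decide_eq_true_eq] at h
            exact h)
          (by decide))
    · exact base_red 49 342 (by norm_num) (by decide)
        (card_lower 49 342 (L.filter (fun p => decide (49 < p) && decide (p ≤ 49^2)))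
          (fun p hp => hLprime p (List.mem_of_mem_filter hp))
          (List.Pairwise.sublist List.filter_sublist hLpw)
          (fun p hp => by
            have h := List.of_mem_filter hp
            simp only [Bool.and_eq_true, decide_eq_true_eq] at h
            exact h)
          (by decide))
    · exact base_red 50 352 (by norm_num) (by decide)
        (card_lower 50 352 (L.filter (fun p => decide (50 < p) && decide (p ≤ 50^2)))
          (fun p hp => hLprime p (List.mem_of_mem_filter hp))
          (List.Pairwise.sublist List.filter_sublist hLpw)
          (fun p hp => by
            have h := List.of_mem_filter hp
            simp only [Bool.and_eq_true, decide_eq_true_eq] at h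
            exact h)
          (by decide))
    · exact base_red 51 363 (by norm_num) (by decide)
        (card_lower 51 363 (L.filter (fun p => decide (51 < p) && decide (p ≤ 51^2)))
          (fun p hp => hLprime p (List.mem_of_mem_filter hp))
          (List.Pairwise.sublist List.filter_sublist hLpw)
          (fun p hp => by
            have h := List.of_mem_filter hp
            simp only [Bool.and_eq_true, decide_eq_true_eq] at h
            exact h)
          (by decide))
    · exact base_red 52 378 (by norm_num) (by decide)
        (card_lower 52 378 (L.filter (fun p => decide (52 < p) && decide (p ≤ 52^2)))
          (fun p hp => hLprime p (List.mem_of_mem_filter hp))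
          (List.Pairwise.sublist List.filter_sublist hLpw)
          (fun p hp => by
            have h := List.of_mem_filter hp
            simp only [Bool.and_eq_true, decide_eq_true_eq] at h
            exact h)
          (by decide))
    · exact base_red 53 393 (by norm_num) (by decide)
        (card_lower 53 393 (L.filter (fun p => decide (53 < p) && decide (p ≤ 53^2)))
          (fun p hp => hLprime p (List.mem_of_mem_filter hp))
          (List.Pairwise.sublist List.filter_sublist hLpw)
          (fun p hp => by
            have h := List.of_mem_filter hp
            simp only [Bool.and_eq_true, decide_eq_true_eq] at h
            exact h)
          (by decide))
    · exact base_red 54 405 (by norm_num) (by decide)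
        (card_lower 54 405 (L.filter (fun p => decide (54 < p) && decide (p ≤ 54^2)))
          (fun p hp => hLprime p (List.mem_of_mem_filter hp))
          (List.Pairwise.sublist List.filter_sublist hLpw)
          (fun p hp => by
            have h := List.of_mem_filter hp
            simp only [Bool.and_eq_true, decide_eq_true_eq] at h
            exact h)
          (by decide))
    · exact base_red 55 418 (by norm_num) (by decide)
        (card_lower 55 418 (L.filter (fun p => decide (55 < p) && decide (p ≤ 55^2)))
          (fun p hp => hLprime p (List.mem_of_mem_filter hp))
          (List.Pairwise.sublist List.filter_sublist hLpw)
          (fun p hp => by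
            have h := List.of_mem_filter hp
            simp only [Bool.and_eq_true, decide_eq_true_eq] at h
            exact h)
          (by decide))
    · exact base_red 56 429 (by norm_num) (by decide)
        (card_lower 56 429 (L.filter (fun p => decide (56 < p) && decide (p ≤ 56^2)))
          (fun p hp => hLprime p (List.mem_of_mem_filter hp))
          (List.Pairwise.sublist List.filter_sublist hLpw)
          (fun p hp => by
            have h := List.of_mem_filter hp
            simp only [Bool.and_eq_true, decide_eq_true_eq] at h
            exact h)
          (by decide))
    · exact base_red 57 441 (by norm_num) (by decide)
        (card_lower 57 441 (L.filter (fun p => decide (57 < p) && decide (p ≤ 57^2)))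
          (fun p hp => hLprime p (List.mem_of_mem_filter hp))
          (List.Pairwise.sublist List.filter_sublist hLpw)
          (fun p hp => by
            have h := List.of_mem_filter hp
            simp only [Bool.and_eq_true, decide_eq_true_eq] at h
            exact h)
          (by decide))
    · exact base_red 58 458 (by norm_num) (by decide)
        (card_lower 58 458 (L.filter (fun p => decide (58 < p) && decide (p ≤ 58^2)))
          (fun p hp => hLprime p (List.mem_of_mem_filter hp))
          (List.Pairwise.sublist List.filter_sublist hLpw)
          (fun p hp => by
            have h := List.of_mem_filter hp
            simp only [Bool.and_eq_true, decide_eq_true_eq] at h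
            exact h)
          (by decide))
    · exact base_red 59 470 (by norm_num) (by decide)
        (card_lower 59 470 (L.filter (fun p => decide (59 < p) && decide (p ≤ 59^2)))
          (fun p hp => hLprime p (List.mem_of_mem_filter hp))
          (List.Pairwise.sublist List.filter_sublist hLpw)
          (fun p hp => by
            have h := List.of_mem_filter hp
            simp only [Bool.and_eq_true, decide_eq_true_eq] at h
            exact h)
          (by decide))
end

section
/- Let p ≥ 2 be an integer, A an invertible n × n integer matrix, b ∈ ℤ^n, and define ȳ ∈ ℤ^n as the integer vector det(A)·A⁻¹b. Write the p-adic digits ȳ ≡ Σ_{i=0}^{T-1} ȳ^{(i)} p^i (mod p^T) with each ȳ^{(i)} having entries in [0, p). Define r^{(i)} := Σ_{j=0}^{i-1} (A ȳ^{(j)})/p^{i-j} ∈ ℚ^n. Then for each k, the vector A ȳ^{(k)} is congruent modulo p to ⌊det(A)·b/p^k⌋ − ⌊r^{(k)}⌋, where floors are taken entrywise. -/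
/-- The key congruence of low-space `p`-adic lifting: with `ȳ = det(A)·A⁻¹b ∈ ℤ^n`
written in `p`-adic digits `ȳ ≡ Σ_{k<T} ȳ^{(k)} p^k (mod p^T)` (digits in `[0,p)`),
and `r^{(k)} := Σ_{j<k} (A ȳ^{(j)})/p^{k-j}`, we have for each `k < T` and each
coordinate `i` the congruence
`(A ȳ^{(k)})_i ≡ ⌊det(A)·b_i / p^k⌋ − ⌊r^{(k)}_i⌋ (mod p)`. -/
theorem padic_lifting_congruence (n T : ℕ) (p : ℕ) (hp : 2 ≤ p)
    (A : Matrix (Fin n) (Fin n) ℤ) (hdet : A.det ≠ 0)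
    (hAp : IsUnit (A.map (Int.cast : ℤ → ZMod p)).det)
    (b ybar : Fin n → ℤ)
    (hybar : A.mulVec ybar = fun i => A.det * b i)
    (ydig : ℕ → Fin n → ℤ)
    (hdig0 : ∀ k i, 0 ≤ ydig k i) (hdig1 : ∀ k i, ydig k i < (p : ℤ))
    (hdigsum : ∀ i, ybar i ≡ (∑ k ∈ Finset.range T, ydig k i * (p : ℤ) ^ k)
        [ZMOD ((p : ℤ) ^ T)]) :
    ∀ k < T, ∀ i : Fin n,
      (A.mulVec (ydig k)) i ≡
        (⌊((A.det * b i : ℤ) : ℚ) / (p : ℚ) ^ k⌋ -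
          ⌊∑ j ∈ Finset.range k, (((A.mulVec (ydig j)) i : ℤ) : ℚ) / (p : ℚ) ^ (k - j)⌋)
        [ZMOD (p : ℤ)] := by
  intro k hk i
  have hp0 : (0:ℤ) < (p:ℤ) := by exact_mod_cast lt_of_lt_of_le two_pos hp
  have hpQ : (0:ℚ) < (p:ℚ) := by exact_mod_cast hp0
  set a : ℕ → ℤ := fun j => A.mulVec (ydig j) i with ha
  set c : ℤ := A.det * b i with hc
  set sT : ℤ := ∑ j ∈ Finset.range T, a j * (p:ℤ)^j with hsT
  -- Step 1: p^T divides c - sT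
  have hdvd : ((p:ℤ)^T) ∣ (c - sT) := by
    have h1 : c = ∑ m, A i m * ybar m := by
      rw [hc, ← congrFun hybar i]
      simp [Matrix.mulVec, dotProduct]
    have h2 : sT = ∑ m, A i m * (∑ j ∈ Finset.range T, ydig j m * (p:ℤ)^j) := by
      rw [hsT]
      simp only [ha, Matrix.mulVec, dotProduct, Finset.sum_mul, Finset.mul_sum]
      rw [Finset.sum_comm]
      congr 1; ext m; congr 1; ext j; ring
    rw [h1, h2, ← Finset.sum_sub_distrib]
    refine Finset.dvd_sum (fun m _ => ?_)
    rw [← mul_sub]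
    exact ((hdigsum m).symm.dvd).mul_left _
  obtain ⟨m, hm⟩ : ∃ m : ℤ, c = sT + (p:ℤ)^T * m := by
    obtain ⟨m, hm⟩ := hdvd
    exact ⟨m, by linarith⟩
  -- Step 2: floor of c/p^k
  have hkT : k ≤ T := le_of_lt hk
  have hpkT : (p:ℚ)^(T-k) * (p:ℚ)^k = (p:ℚ)^T := by
    rw [← pow_add]; congr 1; omega
  have hfc : ⌊((c:ℤ):ℚ) / (p:ℚ)^k⌋ = ⌊((sT:ℤ):ℚ) / (p:ℚ)^k⌋ + (p:ℤ)^(T-k) * m := by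
    have : ((c:ℤ):ℚ) / (p:ℚ)^k = ((sT:ℤ):ℚ) / (p:ℚ)^k + (((p:ℤ)^(T-k) * m : ℤ) : ℚ) := by
      rw [hm]
      push_cast
      field_simp
      rw [← hpkT]; ring
    rw [this, Int.floor_add_intCast]
  -- Step 3: floor of sT/p^k
  set S : ℤ := ∑ j ∈ Finset.Ico k T, a j * (p:ℤ)^(j-k) with hS
  set r : ℚ := ∑ j ∈ Finset.range k, ((a j : ℤ) : ℚ) / (p:ℚ)^(k-j) with hr
  have hfs : ⌊((sT:ℤ):ℚ) / (p:ℚ)^k⌋ = ⌊r⌋ + S := by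
    have hsplit : ((sT:ℤ):ℚ) / (p:ℚ)^k = r + ((S:ℤ):ℚ) := by
      rw [hsT, hr, hS]
      push_cast
      rw [Finset.sum_div, Finset.range_eq_Ico,
        ← Finset.sum_Ico_consecutive (fun j => ((a j : ℤ):ℚ) * (p:ℚ)^j / (p:ℚ)^k)
          (Nat.zero_le k) hkT]
      congr 1
      · refine Finset.sum_congr (by rw [Finset.range_eq_Ico]) (fun j hj => ?_)
        have hjk : j < k := by simpa using hj
        have : (p:ℚ)^(k-j) * (p:ℚ)^j = (p:ℚ)^k := by
          rw [← pow_add]; congr 1; omega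
        field_simp
        rw [← this]; ring
      · refine Finset.sum_congr rfl (fun j hj => ?_)
        have hjk : k ≤ j := (Finset.mem_Ico.mp hj).1
        have : (p:ℚ)^(j-k) * (p:ℚ)^k = (p:ℚ)^j := by
          rw [← pow_add]; congr 1; omega
        field_simp
        rw [← this]; ring
    rw [hsplit, Int.floor_add_intCast]
  -- Step 4: conclude
  show a k ≡ _ [ZMOD (p:ℤ)]
  rw [hfc, hfs]
  have hSsplit : S = a k + ∑ j ∈ Finset.Ico (k+1) T, a j * (p:ℤ)^(j-k) := by
    rw [hS, Finset.sum_eq_sum_Ico_succ_bot hk]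
    simp
  rw [Int.ModEq]
  have hgoal : (⌊r⌋ + S + (p:ℤ)^(T-k) * m - ⌊r⌋) = a k +
      ((∑ j ∈ Finset.Ico (k+1) T, a j * (p:ℤ)^(j-k)) + (p:ℤ)^(T-k) * m) := by
    rw [hSsplit]; ring
  rw [hgoal]
  have hdvd2 : (p:ℤ) ∣ ((∑ j ∈ Finset.Ico (k+1) T, a j * (p:ℤ)^(j-k)) + (p:ℤ)^(T-k) * m) := by
    refine dvd_add (Finset.dvd_sum fun j hj => ?_) ?_
    · have hjk : k + 1 ≤ j := (Finset.mem_Ico.mp hj).1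
      exact Dvd.dvd.mul_left (dvd_pow_self (p:ℤ) (by omega)) _
    · exact Dvd.dvd.mul_right (dvd_pow_self (p:ℤ) (by omega)) _
  obtain ⟨q, hq⟩ := hdvd2
  rw [hq, mul_comm, Int.add_mul_emod_self_right]
end

section
/- With notation as in the p-adic lifting setup, the integral parts satisfy the recurrence ⌊r^{(k+1)}⌋ = ⌊(⌊r^{(k)}⌋ + A ȳ^{(k)})/p⌋ for all k ≥ 0, where r^{(i)} := Σ_{j=0}^{i-1} (A ȳ^{(j)})/p^{i-j} and all floors and divisions are entrywise. -/
lemma floor_div_int' (y : ℚ) (q : ℤ) (hq : 0 < q) : ⌊y / (q : ℚ)⌋ = ⌊y⌋ / q := by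
  have hq' : (0 : ℚ) < (q : ℚ) := by exact_mod_cast hq
  apply le_antisymm
  · rw [Int.le_ediv_iff_mul_le hq, Int.le_floor (α := ℚ)]
    calc ((⌊y / (q : ℚ)⌋ * q : ℤ) : ℚ) = (⌊y / (q : ℚ)⌋ : ℚ) * q := by push_cast; ring
      _ ≤ (y / q) * q := by gcongr; exact Int.floor_le _
      _ = y := div_mul_cancel₀ y hq'.ne'
  · rw [Int.le_floor]
    rw [le_div_iff₀ hq']
    calc ((⌊y⌋ / q : ℤ) : ℚ) * q = ((⌊y⌋ / q * q : ℤ) : ℚ) := by push_cast; ring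
      _ ≤ (⌊y⌋ : ℚ) := by exact_mod_cast Int.ediv_mul_le ⌊y⌋ hq.ne'
      _ ≤ y := Int.floor_le y

/-- Recurrence for the integral parts in `p`-adic lifting: with
`r^{(k)} := Σ_{j<k} (A ȳ^{(j)})/p^{k-j}` (entrywise, over `ℚ`), one has entrywise
`⌊r^{(k+1)}⌋ = ⌊(⌊r^{(k)}⌋ + A ȳ^{(k)})/p⌋` for all `k ≥ 0`. -/
theorem padic_lifting_floor_recurrence (n : ℕ) (p : ℕ) (hp : 2 ≤ p)
    (A : Matrix (Fin n) (Fin n) ℤ) (ydig : ℕ → Fin n → ℤ) :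
    ∀ (k : ℕ) (i : Fin n),
      ⌊∑ j ∈ Finset.range (k + 1),
          (((A.mulVec (ydig j)) i : ℤ) : ℚ) / (p : ℚ) ^ (k + 1 - j)⌋ =
        ⌊(((⌊∑ j ∈ Finset.range k,
              (((A.mulVec (ydig j)) i : ℤ) : ℚ) / (p : ℚ) ^ (k - j)⌋ +
            (A.mulVec (ydig k)) i : ℤ) : ℚ) / (p : ℚ))⌋ := by
  intro k i
  have hp0 : (0:ℤ) < (p:ℤ) := by exact_mod_cast lt_of_lt_of_le two_pos hp
  have hp0' : (0:ℚ) < (p:ℚ) := by exact_mod_cast hp0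
  set a : ℕ → ℚ := fun j => (((A.mulVec (ydig j)) i : ℤ) : ℚ)
  set x : ℚ := ∑ j ∈ Finset.range k, a j / (p : ℚ) ^ (k - j) with hx
  have hsum : ∑ j ∈ Finset.range (k + 1), a j / (p : ℚ) ^ (k + 1 - j)
      = (x + a k) / (p : ℚ) := by
    rw [Finset.sum_range_succ, hx, add_div, Finset.sum_div]
    congr 1
    · apply Finset.sum_congr rfl
      intro j hj
      have hjk : j ≤ k := by have := Finset.mem_range.mp hj; omega
      rw [show k + 1 - j = (k - j) + 1 by omega, pow_succ]
      field_simp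
    · simp
  rw [hsum, show ((p:ℚ)) = (((p:ℤ):ℚ)) by push_cast; ring]
  rw [floor_div_int' _ (p:ℤ) hp0, floor_div_int' _ (p:ℤ) hp0]
  congr 1
  have : ⌊x + a k⌋ = ⌊x⌋ + (A.mulVec (ydig k)) i := Int.floor_add_intCast x _
  rw [this, Int.floor_intCast]
end

section
/- Let F be a field, A ∈ F^{n×n} a singular matrix, and let μ̄(X) be the polynomial obtained from the minimal polynomial of A by dividing out the largest power of X (so μ̄(0) ≠ 0). If F is finite and z is sampled uniformly from F^n, then Pr[μ̄(A)z = 0] ≤ 1/|F|. -/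
open scoped Classical in
/-- Kernel-vector probability bound: let `A` be a singular matrix over a finite field `F`,
and let `μ̄` be the minimal polynomial of `A` with the largest power of `X` divided out
(so `μ̄(0) ≠ 0`). If `z` is uniform in `F^n`, then `Pr[μ̄(A)z = 0] ≤ 1/|F|`. -/
theorem prob_kernel_vector_zero_le (n : ℕ) (F : Type) [Field F] [Fintype F]
    (A : Matrix (Fin n) (Fin n) F) (hsing : A.det = 0)
    (c : ℕ) (μbar : Polynomial F)
    (hmin : minpoly F A = Polynomial.X ^ c * μbar)
    (h0 : μbar.coeff 0 ≠ 0) :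
    ((Finset.univ.filter
        (fun z : Fin n → F => (Polynomial.aeval A μbar).mulVec z = 0)).card : ℝ) /
        (Fintype.card F : ℝ) ^ n ≤ 1 / (Fintype.card F : ℝ) := by
  have hμ : μbar ≠ 0 := fun h => h0 (by simp [h])
  -- n ≥ 1
  have hn : 0 < n := by
    rcases Nat.eq_zero_or_pos n with h | h
    · exfalso
      subst h
      simp [Matrix.det_fin_zero] at hsing
    · exact h
  -- 0 is a root of the minimal polynomial
  have hroot : (minpoly F A).IsRoot 0 := by
    obtain ⟨v, hv, hAv⟩ := Matrix.exists_mulVec_eq_zero_iff.mpr hsing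
    have heig : Module.End.HasEigenvalue (Matrix.toLin' A) 0 :=
      Module.End.hasEigenvalue_of_hasEigenvector
        ⟨by simpa [Module.End.eigenspace, Matrix.toLin'_apply, hAv] using
          (Module.End.mem_eigenspace_iff.mpr (by simp [Matrix.toLin'_apply, hAv])), hv⟩
    have := Module.End.hasEigenvalue_iff_isRoot.mp heig
    rwa [Matrix.minpoly_toLin'] at this
  -- hence c ≥ 1
  have hc : c ≠ 0 := by
    intro hc0
    rw [hmin, hc0] at hroot
    simp only [Polynomial.IsRoot, Polynomial.eval_mul, Polynomial.eval_pow,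
      Polynomial.eval_X, pow_zero, one_mul, Polynomial.coeff_zero_eq_eval_zero] at hroot h0
    exact h0 hroot
  -- B := μ̄(A) is nonzero
  set B : Matrix (Fin n) (Fin n) F := Polynomial.aeval A μbar with hB
  have hBne : B ≠ 0 := by
    intro h
    have hdvd : minpoly F A ∣ μbar := minpoly.dvd F A h
    have hle : (minpoly F A).natDegree ≤ μbar.natDegree :=
      Polynomial.natDegree_le_of_dvd hdvd hμ
    rw [hmin, Polynomial.natDegree_mul (pow_ne_zero c Polynomial.X_ne_zero) hμ,
      Polynomial.natDegree_X_pow] at hle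
    omega
  -- the set of solutions is the kernel of mulVecLin B
  have hcard : (Finset.univ.filter
      (fun z : Fin n → F => B.mulVec z = 0)).card ≤ Fintype.card F ^ (n - 1) := by
    have h1 : (Finset.univ.filter (fun z : Fin n → F => B.mulVec z = 0)).card
        = Fintype.card (LinearMap.ker B.mulVecLin) := by
      rw [Fintype.card_subtype]
      congr 1
      apply Finset.filter_congr
      intro z _
      simp [LinearMap.mem_ker, Matrix.mulVecLin_apply]
    rw [h1]
    have hker : LinearMap.ker B.mulVecLin ≠ ⊤ := by
      intro h
      apply hBne
      ext i j
      have := (LinearMap.ker_eq_top.mp h)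
      have h2 : B.mulVec (Pi.single j 1) = 0 := by
        have := congrFun (congrArg (fun f => f.toFun) this) (Pi.single j 1)
        simpa [Matrix.mulVecLin_apply] using this
      have := congrFun h2 i
      simpa [Matrix.mulVec_single] using this
    have hfr : Module.finrank F (LinearMap.ker B.mulVecLin) < n := by
      have := Submodule.finrank_lt (K := F) (V := Fin n → F)
        hker
      simpa [Module.finrank_pi] using this
    calc Fintype.card (LinearMap.ker B.mulVecLin)
        = Fintype.card F ^ Module.finrank F (LinearMap.ker B.mulVecLin) :=
          Module.card_eq_pow_finrank
      _ ≤ Fintype.card F ^ (n - 1) :=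
          Nat.pow_le_pow_right Fintype.card_pos (by omega)
  -- real arithmetic
  have hq : (0:ℝ) < (Fintype.card F : ℝ) := by exact_mod_cast Fintype.card_pos
  have hqn : (0:ℝ) < (Fintype.card F : ℝ) ^ n := by positivity
  rw [div_le_div_iff₀ hqn hq]
  have : ((Fintype.card F : ℝ) ^ (n - 1)) * (Fintype.card F : ℝ) = (Fintype.card F : ℝ) ^ n := by
    rw [← pow_succ]
    congr 1
    omega
  calc ((Finset.univ.filter
      (fun z : Fin n → F => B.mulVec z = 0)).card : ℝ) * (Fintype.card F : ℝ)
      ≤ ((Fintype.card F : ℝ) ^ (n - 1)) * (Fintype.card F : ℝ) := by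
        apply mul_le_mul_of_nonneg_right _ hq.le
        exact_mod_cast hcard
    _ = 1 * (Fintype.card F : ℝ) ^ n := by rw [this, one_mul]
end
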